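/- arXiv:1904.07109 — 3 statements merged into one kernel-verified Lean document; each statement's English description precedes it below -/
import Mathlib

section
/- For all (t,τ) ∈ [-1,1]×[-1,1], the Green's function G satisfies G(t,τ) ≥ 0, and G(t,τ) > 0 whenever (t,τ) ∈ (-1,1)×(-1,1). -/
noncomputable def greenG (μ t τ : ℝ) : ℝ :=
  (1 / Real.Gamma μ) *
    (if τ ≤ 0 then
      (if τ ≤ t then (1 + τ) ^ (μ - 1)
       else (1 + τ) ^ (μ - 1) - (τ - t) ^ (μ - 1))
    else
      (if t ≤ τ then (1 - τ) ^ (μ - 1)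
       else (1 - τ) ^ (μ - 1) - (t - τ) ^ (μ - 1)))

/-! Each branch of `greenG` is a power `a ^ (μ - 1)`, or a difference `a ^ (μ - 1) - b ^ (μ - 1)`
with `0 ≤ b ≤ a` (strictly `b < a` in the open square), so monotonicity of `x ↦ x ^ (μ - 1)` on
`[0, ∞)` and `Γ(μ) > 0` give the signs. -/

namespace Real

theorem rpow_sub_rpow_nonneg {x y e : ℝ} (hx : 0 ≤ x) (hxy : x ≤ y) (he : 0 ≤ e) :
    0 ≤ y ^ e - x ^ e :=
  sub_nonneg.2 (rpow_le_rpow hx hxy he)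

theorem rpow_sub_rpow_pos {x y e : ℝ} (hx : 0 ≤ x) (hxy : x < y) (he : 0 < e) :
    0 < y ^ e - x ^ e :=
  sub_pos.2 (rpow_lt_rpow hx hxy he)

end Real

section

variable {μ t τ : ℝ}

theorem greenG_nonneg (hμ : 1 ≤ μ) (ht : t ∈ Set.Icc (-1 : ℝ) 1) (hτ : τ ∈ Set.Icc (-1 : ℝ) 1) :
    0 ≤ greenG μ t τ := by
  obtain ⟨ht₀, ht₁⟩ := ht
  obtain ⟨hτ₀, hτ₁⟩ := hτ
  have he : 0 ≤ μ - 1 := by linarith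
  have hΓ : 0 < Real.Gamma μ := Real.Gamma_pos_of_pos (by linarith)
  refine mul_nonneg (by positivity) ?_
  split_ifs
  · exact Real.rpow_nonneg (by linarith) _
  · exact Real.rpow_sub_rpow_nonneg (by linarith) (by linarith) he
  · exact Real.rpow_nonneg (by linarith) _
  · exact Real.rpow_sub_rpow_nonneg (by linarith) (by linarith) he

theorem greenG_pos (hμ : 1 < μ) (ht : t ∈ Set.Ioo (-1 : ℝ) 1) (hτ : τ ∈ Set.Ioo (-1 : ℝ) 1) :
    0 < greenG μ t τ := by
  obtain ⟨ht₀, ht₁⟩ := ht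
  obtain ⟨hτ₀, hτ₁⟩ := hτ
  have he : 0 < μ - 1 := by linarith
  have hΓ : 0 < Real.Gamma μ := Real.Gamma_pos_of_pos (by linarith)
  refine mul_pos (by positivity) ?_
  split_ifs
  · exact Real.rpow_pos_of_pos (by linarith) _
  · exact Real.rpow_sub_rpow_pos (by linarith) (by linarith) he
  · exact Real.rpow_pos_of_pos (by linarith) _
  · exact Real.rpow_sub_rpow_pos (by linarith) (by linarith) he

end

theorem green_nonneg_pos_general (μ : ℝ) (hμ1 : 1 < μ) :
    (∀ t ∈ Set.Icc (-1 : ℝ) 1, ∀ τ ∈ Set.Icc (-1 : ℝ) 1, 0 ≤ greenG μ t τ) ∧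
    (∀ t ∈ Set.Ioo (-1 : ℝ) 1, ∀ τ ∈ Set.Ioo (-1 : ℝ) 1, 0 < greenG μ t τ) :=
  ⟨fun _ ht _ hτ => greenG_nonneg hμ1.le ht hτ, fun _ ht _ hτ => greenG_pos hμ1 ht hτ⟩

theorem green_nonneg_pos (μ : ℝ) (hμ1 : 1 < μ) (hμ2 : μ ≤ 2) :
    (∀ t ∈ Set.Icc (-1 : ℝ) 1, ∀ τ ∈ Set.Icc (-1 : ℝ) 1, 0 ≤ greenG μ t τ) ∧
    (∀ t ∈ Set.Ioo (-1 : ℝ) 1, ∀ τ ∈ Set.Ioo (-1 : ℝ) 1, 0 < greenG μ t τ) :=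
  green_nonneg_pos_general μ hμ1
end

section
/- For all (t,τ) ∈ [-1,1]×[-1,1], the Green's function satisfies the upper bound G(t,τ) ≤ (1/Γ(μ))·(1-|τ|)^{μ-1}. -/
theorem Real.ite_rpow_sub_rpow_le {c : Prop} [Decidable c] {a b p : ℝ} (hb : ¬c → 0 ≤ b) :
    (if c then a ^ p else a ^ p - b ^ p) ≤ a ^ p := by
  split_ifs with h
  · exact le_rfl
  · exact sub_le_self _ (Real.rpow_nonneg (hb h) p)

theorem green_upper_bound_general (μ : ℝ) (hμ1 : 1 < μ) :
    ∀ t ∈ Set.Icc (-1 : ℝ) 1, ∀ τ ∈ Set.Icc (-1 : ℝ) 1,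
      greenG μ t τ ≤ (1 / Real.Gamma μ) * (1 - |τ|) ^ (μ - 1) := by
  intro t _ τ _
  have hΓ : 0 ≤ 1 / Real.Gamma μ := one_div_nonneg.2 (Real.Gamma_pos_of_pos (by linarith)).le
  refine mul_le_mul_of_nonneg_left ?_ hΓ
  by_cases hτ : τ ≤ 0
  · rw [if_pos hτ, abs_of_nonpos hτ, sub_neg_eq_add]
    exact Real.ite_rpow_sub_rpow_le fun h => sub_nonneg.2 (not_le.1 h).le
  · rw [if_neg hτ, abs_of_pos (not_le.1 hτ)]
    exact Real.ite_rpow_sub_rpow_le fun h => sub_nonneg.2 (not_le.1 h).le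

theorem green_upper_bound (μ : ℝ) (hμ1 : 1 < μ) (hμ2 : μ ≤ 2) :
    ∀ t ∈ Set.Icc (-1 : ℝ) 1, ∀ τ ∈ Set.Icc (-1 : ℝ) 1,
      greenG μ t τ ≤ (1 / Real.Gamma μ) * (1 - |τ|) ^ (μ - 1) :=
  green_upper_bound_general μ hμ1
end

section
/- Let 1 < μ ≤ 2, let q : (-1,1) → [0,∞) and y : (-1,1) → (0,∞) be continuous with ∫_{-1}^1 (1-|t|)^{μ-1} q(t) dt < ∞, and suppose a sequence of continuous symmetric functions x_n : [-1,1] → ℝ satisfies x_n(t) = ∫_{-1}^1 G(t,τ) g_n(τ) dτ where the g_n are continuous, and 0 ≤ g_n(τ) ≤ q(τ) for all n and τ. Then the family {x_n} is uniformly bounded by (1/Γ(μ))∫_{-1}^1 (1-|τ|)^{μ-1} q(τ) dτ and equicontinuous on [-1,1], hence has a uniformly convergent subsequence. -/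
open MeasureTheory Set Filter Topology BoundedContinuousFunction

theorem EquicontinuousOn.congr {ι X α : Type*} [TopologicalSpace X] [UniformSpace α]
    {F G : ι → X → α} {s : Set X} (hF : EquicontinuousOn F s) (hFG : ∀ i, EqOn (F i) (G i) s) :
    EquicontinuousOn G s := by
  have : s.domRestrict ∘ F = s.domRestrict ∘ G :=
    funext fun i => domRestrict_eq_domRestrict_iff.mpr (hFG i)
  rw [← equicontinuous_restrict_iff, ← this]
  exact (equicontinuous_restrict_iff F).mpr hF

theorem exists_subseq_tendstoUniformlyOn_of_equicontinuousOn {X β : Type*} [TopologicalSpace X]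
    [MetricSpace β] {s : Set X} (hs : IsCompact s) {K : Set β} (hK : IsCompact K)
    {f : ℕ → X → β} (hfK : ∀ n, ∀ x ∈ s, f n x ∈ K) (hf : EquicontinuousOn f s) :
    ∃ φ : ℕ → ℕ, StrictMono φ ∧ ∃ z : X → β,
      TendstoUniformlyOn (fun k => f (φ k)) z atTop s := by
  classical
  have : CompactSpace s := isCompact_iff_compactSpace.mp hs
  have hF : Equicontinuous (s.domRestrict ∘ f) := (equicontinuous_restrict_iff f).mpr hf
  let F : ℕ → s →ᵇ β := fun n =>
    mkOfCompact ⟨s.domRestrict (f n), hF.continuous n⟩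
  have hFeq : Equicontinuous ((↑) : range F → s → β) := by
    intro x₀ U hU
    filter_upwards [hF x₀ U hU] with x hx
    rintro ⟨_, n, rfl⟩
    exact hx n
  have hA : IsCompact (closure (range F)) :=
    arzela_ascoli K hK (range F) (by rintro _ x ⟨n, rfl⟩; exact hfK n x x.2) hFeq
  obtain ⟨a, -, φ, hφ, hlim⟩ := hA.tendsto_subseq fun n => subset_closure (mem_range_self n)
  refine ⟨φ, hφ, fun x => if hx : x ∈ s then a ⟨x, hx⟩ else f 0 x, ?_⟩
  rw [tendstoUniformlyOn_iff_restrict]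
  convert BoundedContinuousFunction.tendsto_iff_tendstoUniformly.mp hlim using 1
  · rfl
  · ext x
    simp [x.2]

section KernelIntegral

variable {α : Type*} [MeasurableSpace α] {ν : Measure α} {w q : α → ℝ}

theorem abs_integral_mul_le_integral_mul {k h : α → ℝ} (hwq : Integrable (fun τ => w τ * q τ) ν)
    (hk : ∀ᵐ τ ∂ν, |k τ| ≤ w τ) (hh : ∀ᵐ τ ∂ν, |h τ| ≤ q τ) :
    |∫ τ, k τ * h τ ∂ν| ≤ ∫ τ, w τ * q τ ∂ν := by
  rw [← Real.norm_eq_abs]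
  refine norm_integral_le_of_norm_le hwq ?_
  filter_upwards [hk, hh] with τ hkτ hhτ
  rw [Real.norm_eq_abs, abs_mul]
  exact mul_le_mul hkτ hhτ (abs_nonneg _) ((abs_nonneg _).trans hkτ)

theorem integrable_mul_of_abs_le {k h : α → ℝ} (hwq : Integrable (fun τ => w τ * q τ) ν)
    (hkm : AEStronglyMeasurable k ν) (hhm : AEStronglyMeasurable h ν)
    (hk : ∀ᵐ τ ∂ν, |k τ| ≤ w τ) (hh : ∀ᵐ τ ∂ν, |h τ| ≤ q τ) :
    Integrable (fun τ => k τ * h τ) ν := by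
  refine hwq.mono' (hkm.mul hhm) ?_
  filter_upwards [hk, hh] with τ hkτ hhτ
  rw [Real.norm_eq_abs, abs_mul]
  exact mul_le_mul hkτ hhτ (abs_nonneg _) ((abs_nonneg _).trans hkτ)

theorem equicontinuousOn_integral_kernel_mul {X ι : Type*} [TopologicalSpace X]
    [FirstCountableTopology X] {s : Set X}
    {K : X → α → ℝ} (hKc : ∀ τ, ContinuousOn (fun t => K t τ) s)
    (hKm : ∀ t, AEStronglyMeasurable (K t) ν) (hKw : ∀ t ∈ s, ∀ᵐ τ ∂ν, |K t τ| ≤ w τ)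
    (hwq : Integrable (fun τ => w τ * q τ) ν) (hqm : AEStronglyMeasurable q ν)
    (hq0 : ∀ᵐ τ ∂ν, 0 ≤ q τ) {h : ι → α → ℝ} (hhm : ∀ i, AEStronglyMeasurable (h i) ν)
    (hh : ∀ i, ∀ᵐ τ ∂ν, |h i τ| ≤ q τ) :
    EquicontinuousOn (fun i t => ∫ τ, K t τ * h i τ ∂ν) s := by
  intro t₀ ht₀
  rw [Metric.uniformity_basis_dist.equicontinuousWithinAt_iff_right]
  intro ε hε
  let Φ : X → ℝ := fun t => ∫ τ, |K t τ - K t₀ τ| * q τ ∂ν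
  have hdiff : ∀ t ∈ s, ∀ᵐ τ ∂ν, |K t τ - K t₀ τ| ≤ 2 * w τ := fun t ht => by
    filter_upwards [hKw t ht, hKw t₀ ht₀] with τ h₁ h₂
    linarith [abs_sub (K t τ) (K t₀ τ)]
  have hwq2 : Integrable (fun τ => 2 * w τ * q τ) ν := by
    simpa only [mul_assoc] using hwq.const_mul 2
  have hΦ : ContinuousWithinAt Φ s t₀ := by
    refine continuousWithinAt_of_dominated (bound := fun τ => 2 * w τ * q τ)
      (Eventually.of_forall fun t => ((hKm t).sub (hKm t₀)).norm.mul hqm) ?_ hwq2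
      (Eventually.of_forall fun τ => (((hKc τ t₀ ht₀).sub continuousWithinAt_const).abs).mul
        continuousWithinAt_const)
    filter_upwards [eventually_mem_nhdsWithin] with t ht
    filter_upwards [hdiff t ht, hq0] with τ hτ hqτ
    rw [Real.norm_eq_abs, abs_mul, abs_abs, abs_of_nonneg hqτ]
    exact mul_le_mul_of_nonneg_right hτ hqτ
  have hΦ₀ : Φ t₀ = 0 := by simp [Φ]
  have hΦε : ∀ᶠ t in 𝓝[s] t₀, Φ t < ε := (hΦ₀ ▸ hΦ.tendsto).eventually_lt_const hε
  filter_upwards [hΦε, eventually_mem_nhdsWithin] with t hΦt ht i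
  have hint : ∀ t ∈ s, Integrable (fun τ => K t τ * h i τ) ν := fun t ht =>
    integrable_mul_of_abs_le hwq (hKm t) (hhm i) (hKw t ht) (hh i)
  have hwq' : Integrable (fun τ => |K t τ - K t₀ τ| * q τ) ν :=
    integrable_mul_of_abs_le hwq2 (((hKm t).sub (hKm t₀)).norm) hqm (by simpa only [abs_abs] using hdiff t ht)
      (by filter_upwards [hq0] with τ hqτ using (abs_of_nonneg hqτ).le)
  calc dist (∫ τ, K t₀ τ * h i τ ∂ν) (∫ τ, K t τ * h i τ ∂ν)
      = |∫ τ, (K t τ - K t₀ τ) * h i τ ∂ν| := by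
        rw [dist_comm, Real.dist_eq, ← integral_sub (hint t ht) (hint t₀ ht₀)]
        simp only [sub_mul]
    _ ≤ Φ t := abs_integral_mul_le_integral_mul hwq' (Eventually.of_forall fun τ => le_rfl) (hh i)
    _ < ε := hΦt

end KernelIntegral

theorem greenG_eq_sub_rpow {μ : ℝ} (hμ : 1 < μ) (t τ : ℝ) :
    greenG μ t τ = 1 / Real.Gamma μ *
      ((1 - |τ|) ^ (μ - 1) - (if τ ≤ 0 then max (τ - t) 0 else max (t - τ) 0) ^ (μ - 1)) := by
  have hμ0 : μ - 1 ≠ 0 := by linarith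
  unfold greenG
  rcases le_or_gt τ 0 with hτ | hτ
  · rw [if_pos hτ, if_pos hτ, abs_of_nonpos hτ, sub_neg_eq_add, add_comm 1 τ]
    rcases le_or_gt τ t with h | h
    · rw [if_pos h, max_eq_right (by linarith), Real.zero_rpow hμ0, sub_zero, add_comm]
    · rw [if_neg (not_le.mpr h), max_eq_left (by linarith), add_comm]
  · rw [if_neg (not_le.mpr hτ), if_neg (not_le.mpr hτ), abs_of_pos hτ]
    rcases le_or_gt t τ with h | h
    · rw [if_pos h, max_eq_right (by linarith), Real.zero_rpow hμ0, sub_zero]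
    · rw [if_neg (not_le.mpr h), max_eq_left (by linarith)]

theorem continuous_greenG_left {μ : ℝ} (hμ : 1 < μ) (τ : ℝ) :
    Continuous fun t => greenG μ t τ := by
  simp_rw [greenG_eq_sub_rpow hμ]
  refine continuous_const.mul (continuous_const.sub (Continuous.rpow_const ?_
    fun _ => Or.inr (by linarith)))
  split
  · exact (continuous_const.sub continuous_id).max continuous_const
  · exact (continuous_id.sub continuous_const).max continuous_const

theorem measurable_greenG {μ : ℝ} (hμ : 1 < μ) (t : ℝ) : Measurable (greenG μ t) := by
  have hpow : ∀ {f : ℝ → ℝ}, Continuous f → Measurable fun τ => f τ ^ (μ - 1) :=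
    fun hf => (hf.rpow_const fun _ => Or.inr (by linarith)).measurable
  simp_rw [funext (greenG_eq_sub_rpow hμ t), apply_ite (fun r : ℝ => r ^ (μ - 1))]
  exact measurable_const.mul ((hpow (continuous_const.sub continuous_abs)).sub
    (Measurable.ite measurableSet_Iic
      (hpow ((continuous_id.sub continuous_const).max continuous_const))
      (hpow ((continuous_const.sub continuous_id).max continuous_const))))

theorem abs_greenG_le {μ t τ : ℝ} (hμ : 1 < μ) (ht : t ∈ Icc (-1 : ℝ) 1)
    (hτ : τ ∈ Icc (-1 : ℝ) 1) :
    |greenG μ t τ| ≤ 1 / Real.Gamma μ * (1 - |τ|) ^ (μ - 1) := by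
  have hΓ : 0 < 1 / Real.Gamma μ := one_div_pos.mpr (Real.Gamma_pos_of_pos (by linarith))
  rw [greenG_eq_sub_rpow hμ]
  set d := if τ ≤ 0 then max (τ - t) 0 else max (t - τ) 0
  have hd0 : 0 ≤ d := by unfold d; split <;> exact le_max_right _ _
  have hd1 : d ≤ 1 - |τ| := by
    unfold d
    split
    · rw [abs_of_nonpos ‹_›]; exact max_le (by linarith [ht.1]) (by linarith [hτ.1])
    · rw [abs_of_pos (not_le.mp ‹_›)]; exact max_le (by linarith [ht.2]) (by linarith [hτ.2])
  have hpow := Real.rpow_le_rpow hd0 hd1 (by linarith : (0 : ℝ) ≤ μ - 1)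
  have hpow0 := Real.rpow_nonneg hd0 (μ - 1)
  rw [abs_of_nonneg (mul_nonneg hΓ.le (by linarith))]
  exact mul_le_mul_of_nonneg_left (by linarith) hΓ.le

theorem compactness_of_solutions_general (μ : ℝ) (hμ1 : 1 < μ)
    (q : ℝ → ℝ) (hq : ContinuousOn q (Set.Ioo (-1) 1))
    (hqnn : ∀ t ∈ Set.Ioo (-1 : ℝ) 1, 0 ≤ q t)
    (hqint : MeasureTheory.IntegrableOn
      (fun t => (1 - |t|) ^ (μ - 1) * q t) (Set.Ioo (-1 : ℝ) 1))
    (x : ℕ → ℝ → ℝ) (g : ℕ → ℝ → ℝ)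
    (hgc : ∀ n, ContinuousOn (g n) (Set.Ioo (-1) 1))
    (hgbd : ∀ n, ∀ τ ∈ Set.Ioo (-1 : ℝ) 1, 0 ≤ g n τ ∧ g n τ ≤ q τ)
    (hrep : ∀ n, ∀ t ∈ Set.Icc (-1 : ℝ) 1,
      x n t = ∫ τ in (-1 : ℝ)..1, greenG μ t τ * g n τ) :
    (∀ n, ∀ t ∈ Set.Icc (-1 : ℝ) 1,
      |x n t| ≤ (1 / Real.Gamma μ) *
        ∫ τ in (-1 : ℝ)..1, (1 - |τ|) ^ (μ - 1) * q τ) ∧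
    EquicontinuousOn x (Set.Icc (-1 : ℝ) 1) ∧
    ∃ φ : ℕ → ℕ, StrictMono φ ∧ ∃ z : ℝ → ℝ,
      TendstoUniformlyOn (fun k => x (φ k)) z Filter.atTop
        (Set.Icc (-1 : ℝ) 1) := by
  set ν := volume.restrict (Ioo (-1 : ℝ) 1)
  set w : ℝ → ℝ := fun τ => 1 / Real.Gamma μ * (1 - |τ|) ^ (μ - 1)
  have hI : ∀ f : ℝ → ℝ, ∫ τ in (-1 : ℝ)..1, f τ = ∫ τ, f τ ∂ν := fun f => by
    rw [intervalIntegral.integral_of_le (by norm_num), integral_Ioc_eq_integral_Ioo]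
  have hxK : ∀ n, EqOn (fun t => ∫ τ, greenG μ t τ * g n τ ∂ν) (x n) (Icc (-1) 1) :=
    fun n t ht => ((hrep n t ht).trans (hI _)).symm
  have hGw : ∀ t ∈ Icc (-1 : ℝ) 1, ∀ᵐ τ ∂ν, |greenG μ t τ| ≤ w τ := fun t ht =>
    ae_restrict_of_forall_mem measurableSet_Ioo fun τ hτ =>
      abs_greenG_le hμ1 ht (Ioo_subset_Icc_self hτ)
  have hgq : ∀ n, ∀ᵐ τ ∂ν, |g n τ| ≤ q τ := fun n =>
    ae_restrict_of_forall_mem measurableSet_Ioo fun τ hτ =>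
      (abs_of_nonneg (hgbd n τ hτ).1).trans_le (hgbd n τ hτ).2
  have hwq : Integrable (fun τ => w τ * q τ) ν := by
    simpa only [w, mul_assoc] using hqint.const_mul (1 / Real.Gamma μ)
  have hbound : ∀ n, ∀ t ∈ Icc (-1 : ℝ) 1,
      |x n t| ≤ 1 / Real.Gamma μ * ∫ τ in (-1 : ℝ)..1, (1 - |τ|) ^ (μ - 1) * q τ := by
    intro n t ht
    rw [← hxK n ht, hI, ← integral_const_mul]
    simpa only [w, mul_assoc] using abs_integral_mul_le_integral_mul hwq (hGw t ht) (hgq n)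
  have hequi : EquicontinuousOn x (Icc (-1 : ℝ) 1) :=
    (equicontinuousOn_integral_kernel_mul (fun τ => (continuous_greenG_left hμ1 τ).continuousOn)
      (fun t => (measurable_greenG hμ1 t).aestronglyMeasurable) hGw hwq
      (hq.aestronglyMeasurable measurableSet_Ioo)
      (ae_restrict_of_forall_mem measurableSet_Ioo hqnn)
      (fun n => (hgc n).aestronglyMeasurable measurableSet_Ioo) hgq).congr hxK
  exact ⟨hbound, hequi, exists_subseq_tendstoUniformlyOn_of_equicontinuousOn isCompact_Icc
    isCompact_Icc (fun n t ht => abs_le.mp (hbound n t ht)) hequi⟩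

theorem compactness_of_solutions (μ : ℝ) (hμ1 : 1 < μ) (hμ2 : μ ≤ 2)
    (q : ℝ → ℝ) (hq : ContinuousOn q (Set.Ioo (-1) 1))
    (hqnn : ∀ t ∈ Set.Ioo (-1 : ℝ) 1, 0 ≤ q t)
    (hqint : MeasureTheory.IntegrableOn
      (fun t => (1 - |t|) ^ (μ - 1) * q t) (Set.Ioo (-1 : ℝ) 1))
    (x : ℕ → ℝ → ℝ) (g : ℕ → ℝ → ℝ)
    (hxc : ∀ n, ContinuousOn (x n) (Set.Icc (-1) 1))
    (hxsymm : ∀ n, ∀ t ∈ Set.Icc (-1 : ℝ) 1, x n t = x n (-t))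
    (hgc : ∀ n, ContinuousOn (g n) (Set.Ioo (-1) 1))
    (hgbd : ∀ n, ∀ τ ∈ Set.Ioo (-1 : ℝ) 1, 0 ≤ g n τ ∧ g n τ ≤ q τ)
    (hrep : ∀ n, ∀ t ∈ Set.Icc (-1 : ℝ) 1,
      x n t = ∫ τ in (-1 : ℝ)..1, greenG μ t τ * g n τ) :
    (∀ n, ∀ t ∈ Set.Icc (-1 : ℝ) 1,
      |x n t| ≤ (1 / Real.Gamma μ) *
        ∫ τ in (-1 : ℝ)..1, (1 - |τ|) ^ (μ - 1) * q τ) ∧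
    EquicontinuousOn x (Set.Icc (-1 : ℝ) 1) ∧
    ∃ φ : ℕ → ℕ, StrictMono φ ∧ ∃ z : ℝ → ℝ,
      TendstoUniformlyOn (fun k => x (φ k)) z Filter.atTop
        (Set.Icc (-1 : ℝ) 1) :=
  compactness_of_solutions_general μ hμ1 q hq hqnn hqint x g hgc hgbd hrep
end
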